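/- arXiv:1311.0682 — 4 statements merged into one kernel-verified Lean document; each statement's English description precedes it below -/
import Mathlib

section
/- If a shadow over one backbone of genus g ≥ 1 has n arcs and r boundary components, then r ≤ 4g - 1, and consequently n = 2g + r - 1 ≤ 6g - 2. -/
/-!
Every boundary component has length at least 3, except for at most one of length 2, so
counting arc-sides gives `3r ≤ 2n + ν₂ ≤ 2n + 1`. Substituting Euler's relation
`n = 2g + r - 1` yields `r ≤ 4g - 1`, and then `n ≤ 6g - 2`.
-/

theorem three_mul_le_mul_add_ite {ν : ℕ → ℕ} (h0 : ν 0 = 0) (h1 : ν 1 = 0) (ℓ : ℕ) :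
    3 * ν ℓ ≤ ℓ * ν ℓ + if ℓ = 2 then ν 2 else 0 := by
  match ℓ with
  | 0 => simp [h0]
  | 1 => simp [h1]
  | 2 => rw [if_pos rfl]; omega
  | ℓ + 3 =>
    have : 3 * ν (ℓ + 3) ≤ (ℓ + 3) * ν (ℓ + 3) := Nat.mul_le_mul_right _ (by omega)
    simpa using this

theorem three_mul_sum_le_sum_mul_add (s : Finset ℕ) {ν : ℕ → ℕ} (h0 : ν 0 = 0)
    (h1 : ν 1 = 0) : 3 * ∑ ℓ ∈ s, ν ℓ ≤ ∑ ℓ ∈ s, ℓ * ν ℓ + ν 2 := by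
  have hite : ∑ ℓ ∈ s, (if ℓ = 2 then ν 2 else 0) ≤ ν 2 := by
    rw [Finset.sum_ite_eq']
    split_ifs <;> omega
  calc 3 * ∑ ℓ ∈ s, ν ℓ = ∑ ℓ ∈ s, 3 * ν ℓ := Finset.mul_sum _ _ _
    _ ≤ ∑ ℓ ∈ s, (ℓ * ν ℓ + if ℓ = 2 then ν 2 else 0) :=
        Finset.sum_le_sum fun ℓ _ => three_mul_le_mul_add_ite h0 h1 ℓ
    _ ≤ ∑ ℓ ∈ s, ℓ * ν ℓ + ν 2 := by
        rw [Finset.sum_add_distrib]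
        exact Nat.add_le_add_left hite _

theorem shadow_boundary_bound_general (n r g : ℕ) (ν : ℕ → ℕ)
    (hsum : 2 * n = ∑ ℓ ∈ Finset.range (2 * n + 1), ℓ * ν ℓ)
    (hr : r = ∑ ℓ ∈ Finset.range (2 * n + 1), ν ℓ)
    (h0 : ν 0 = 0) (h1 : ν 1 = 0) (h2 : ν 2 ≤ 1)
    (hn : n + 1 = 2 * g + r) :
    r ≤ 4 * g - 1 ∧ n ≤ 6 * g - 2 := by
  have hcount : 3 * r ≤ 2 * n + ν 2 := by
    have := three_mul_sum_le_sum_mul_add (Finset.range (2 * n + 1)) h0 h1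
    rwa [← hr, ← hsum] at this
  omega

/-- If a shadow over one backbone of genus `g ≥ 1` has `n` arcs and `r` boundary
components, with `ν ℓ` counting boundary components of length `ℓ` in the polygonal
model (so `2n = Σ ℓ·ν ℓ`, `r = Σ ν ℓ`, `ν 0 = ν 1 = 0`, `ν 2 ≤ 1`, `n = 2g + r - 1`),
then `r ≤ 4g - 1` and consequently `n = 2g + r - 1 ≤ 6g - 2`. -/
theorem shadow_boundary_bound (n r g : ℕ) (ν : ℕ → ℕ) (hg : 1 ≤ g)
    (hsum : 2 * n = ∑ ℓ ∈ Finset.range (2 * n + 1), ℓ * ν ℓ)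
    (hsupp : ∀ ℓ, ν ℓ ≠ 0 → ℓ ≤ 2 * n)
    (hr : r = ∑ ℓ ∈ Finset.range (2 * n + 1), ν ℓ)
    (h0 : ν 0 = 0) (h1 : ν 1 = 0) (h2 : ν 2 ≤ 1)
    (hn : n + 1 = 2 * g + r) :
    r ≤ 4 * g - 1 ∧ n ≤ 6 * g - 2 :=
  shadow_boundary_bound_general n r g ν hsum hr h0 h1 h2 hn
end

section
/- For fixed g ≥ 1, the set of shadows of genus g over one backbone is finite. -/
/-!
Let `σ = ρ ∘ π` be the boundary permutation of a shadow `π` on `2n` points, `ρ` the rotation,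
so that for `n > 0` the genus relation reads `n + 1 = 2g + #cycles(σ)`. A fixed point of `σ`
would be an arc `{x - 1, x}` or `{0, 2n - 1}`, which crosses nothing, and a 2-cycle avoiding the
point `0` would be a pair of stacked arcs. Hence every cycle of `σ` has at least three points
except possibly the one through `0`, so `3 #cycles(σ) ≤ 2n + 1`, which gives `n ≤ 6g - 2`.
-/


def IsMatching {m : ℕ} (π : Equiv.Perm (Fin m)) : Prop :=
  ∀ i, π i ≠ i ∧ π (π i) = i

def Crosses {m : ℕ} (π : Equiv.Perm (Fin m)) (i j : Fin m) : Prop :=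
  (min i (π i) < min j (π j) ∧ min j (π j) < max i (π i) ∧ max i (π i) < max j (π j)) ∨
  (min j (π j) < min i (π i) ∧ min i (π i) < max j (π j) ∧ max j (π j) < max i (π i))

def NoLoneArcs {m : ℕ} (π : Equiv.Perm (Fin m)) : Prop :=
  ∀ i, ∃ j, Crosses π i j

def StackPair {m : ℕ} (π : Equiv.Perm (Fin m)) (i j : Fin m) : Prop :=
  (j : ℕ) = (i : ℕ) + 1 ∧ (π j : ℕ) + 1 = (π i : ℕ) ∧ (i : ℕ) < (π j : ℕ)

def NoStacks {m : ℕ} (π : Equiv.Perm (Fin m)) : Prop :=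
  ∀ i j, ¬ StackPair π i j

def IsShadow {m : ℕ} (π : Equiv.Perm (Fin m)) : Prop :=
  IsMatching π ∧ NoLoneArcs π ∧ NoStacks π

def Irred {m : ℕ} (π : Equiv.Perm (Fin m)) : Prop :=
  ∀ i j : Fin m, Relation.ReflTransGen (Crosses π) i j

noncomputable def numCycles {m : ℕ} (σ : Equiv.Perm (Fin m)) : ℕ :=
  Nat.card (Quotient (MulAction.orbitRel (Subgroup.zpowers σ) (Fin m)))

def HasGenus (n : ℕ) (π : Equiv.Perm (Fin (2*n))) (g : ℕ) : Prop :=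
  n + 1 = 2*g + max 1 (numCycles (finRotate (2*n) * π))

def lastV (n : ℕ) (c : Fin (2*n)) : Fin (2*n) :=
  ⟨2*n - 1, Nat.sub_lt c.pos Nat.one_pos⟩

noncomputable def twoRotate (n : ℕ) (c : Fin (2*n)) : Equiv.Perm (Fin (2*n)) :=
  finRotate (2*n) * Equiv.swap c (lastV n c)

def HasGenus2 (n : ℕ) (c : Fin (2*n)) (π : Equiv.Perm (Fin (2*n))) (g : ℕ) : Prop :=
  n = 2*g + numCycles (twoRotate n c * π)

def NoStacks2 {n : ℕ} (π : Equiv.Perm (Fin (2*n))) (c : Fin (2*n)) : Prop :=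
  ∀ i j, StackPair π i j → (i : ℕ) = (c : ℕ) ∨ (π j : ℕ) = (c : ℕ)

def IsShadow2 {n : ℕ} (π : Equiv.Perm (Fin (2*n))) (c : Fin (2*n)) : Prop :=
  IsMatching π ∧ NoLoneArcs π ∧ NoStacks2 π c

def TypeA (n : ℕ) (c : Fin (2*n)) (π : Equiv.Perm (Fin (2*n))) : Prop :=
  (twoRotate n c * π).SameCycle (π c) (π (lastV n c))

def HasExtArc {n : ℕ} (c : Fin (2*n)) (π : Equiv.Perm (Fin (2*n))) : Prop :=
  ∃ i : Fin (2*n), (i : ℕ) ≤ (c : ℕ) ∧ (c : ℕ) < (π i : ℕ)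

open MulAction Equiv

section OrbitCount

variable {α : Type*} (σ : Perm α)

lemma mem_orbit_zpowers_pow (a : α) (k : ℕ) : (σ ^ k) a ∈ orbit (Subgroup.zpowers σ) a :=
  ⟨⟨σ ^ k, Subgroup.npow_mem_zpowers σ k⟩, rfl⟩

lemma two_le_ncard_orbit_zpowers [Finite α] {a : α} (ha : σ a ≠ a) :
    2 ≤ (orbit (Subgroup.zpowers σ) a).ncard := by
  have hsub : {a, σ a} ⊆ orbit (Subgroup.zpowers σ) a := by
    simp only [Set.insert_subset_iff, Set.singleton_subset_iff]
    exact ⟨mem_orbit_self a, mem_orbit_zpowers_pow σ a 1⟩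
  exact (Set.ncard_pair ha.symm).symm.le.trans (Set.ncard_le_ncard hsub)

lemma three_le_ncard_orbit_zpowers [Finite α] {a : α} (h₁ : ∀ x, σ x ≠ x)
    (h₂ : σ (σ a) ≠ a) :
    3 ≤ (orbit (Subgroup.zpowers σ) a).ncard := by
  have hsub : {a, σ a, σ (σ a)} ⊆ orbit (Subgroup.zpowers σ) a := by
    simp only [Set.insert_subset_iff, Set.singleton_subset_iff]
    exact ⟨mem_orbit_self a, mem_orbit_zpowers_pow σ a 1, mem_orbit_zpowers_pow σ a 2⟩
  have hcard : ({a, σ a, σ (σ a)} : Set α).ncard = 3 :=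
    Set.ncard_eq_three.mpr ⟨_, _, _, (h₁ a).symm, h₂.symm, (h₁ (σ a)).symm, rfl⟩
  exact hcard.symm.le.trans (Set.ncard_le_ncard hsub)

/-- The orbit sizes add up to `card α`; each orbit has at least two points, and all but the one
through `x₀` have at least three. -/
theorem three_mul_card_orbits_zpowers_le [Finite α] (x₀ : α) (hfix : ∀ x, σ x ≠ x)
    (htwo : ∀ x, σ (σ x) = x → x = x₀ ∨ σ x = x₀) :
    3 * Nat.card (orbitRel.Quotient (Subgroup.zpowers σ) α) ≤ Nat.card α + 1 := by
  classical
  let _ := Fintype.ofFinite (orbitRel.Quotient (Subgroup.zpowers σ) α)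
  set ω₀ : orbitRel.Quotient (Subgroup.zpowers σ) α := Quotient.mk'' x₀
  have hlarge :
      ∀ ω, 3 ≤ (orbit (Subgroup.zpowers σ) ω.out).ncard + if ω = ω₀ then 1 else 0 := by
    intro ω
    split_ifs with hω
    · have := two_le_ncard_orbit_zpowers σ (hfix ω.out)
      omega
    · refine three_le_ncard_orbit_zpowers σ hfix fun h => hω ?_
      rw [← Quotient.out_eq' ω]
      rcases htwo _ h with hx₀ | hx₀
      · rw [hx₀]
      · rw [show ω₀ = Quotient.mk'' (σ ω.out) by rw [hx₀]]
        exact (Quotient.sound (mem_orbit_zpowers_pow σ ω.out 1)).symm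
  calc 3 * Nat.card (orbitRel.Quotient (Subgroup.zpowers σ) α)
      ≤ ∑ ω, ((orbit (Subgroup.zpowers σ) ω.out).ncard + if ω = ω₀ then 1 else 0) := by
        rw [Nat.card_eq_fintype_card, mul_comm, ← smul_eq_mul, ← Finset.card_univ,
          ← Finset.sum_const]
        exact Finset.sum_le_sum fun ω _ => hlarge ω
    _ = Nat.card α + 1 := by
        rw [Finset.sum_add_distrib, Finset.sum_ite_eq', if_pos (Finset.mem_univ _),
          Nat.card_congr (selfEquivSigmaOrbits (Subgroup.zpowers σ) α), Nat.card_sigma]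
        rfl

end OrbitCount

lemma val_finRotate {m : ℕ} (x : Fin m) :
    (finRotate m x : ℕ) = if (x : ℕ) + 1 = m then 0 else (x : ℕ) + 1 := by
  cases m with
  | zero => exact x.elim0
  | succ k => simp [Fin.val_add_one, Fin.ext_iff]

section Shadow

variable {m : ℕ} {π : Equiv.Perm (Fin m)}

lemma Crosses.val {i j : Fin m} (h : Crosses π i j) :
    (min (i : ℕ) (π i) < min (j : ℕ) (π j) ∧ min (j : ℕ) (π j) < max (i : ℕ) (π i) ∧
        max (i : ℕ) (π i) < max (j : ℕ) (π j)) ∨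
      (min (j : ℕ) (π j) < min (i : ℕ) (π i) ∧ min (i : ℕ) (π i) < max (j : ℕ) (π j) ∧
        max (j : ℕ) (π j) < max (i : ℕ) (π i)) := by
  simpa only [Crosses, Fin.lt_def, Fin.coe_min, Fin.coe_max] using h

lemma IsShadow.finRotate_mul_apply_ne (h : IsShadow π) (x : Fin m) :
    (finRotate m * π) x ≠ x := by
  intro hx
  have hval := val_finRotate (π x)
  rw [← Equiv.Perm.mul_apply, hx] at hval
  obtain ⟨j, hj⟩ := h.2.1 x
  have := hj.val
  have := j.isLt
  have := (π j).isLt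
  split_ifs at hval <;> omega

lemma IsShadow.val_eq_zero_of_finRotate_mul_sq (h : IsShadow π) {x : Fin m}
    (hx : (finRotate m * π) ((finRotate m * π) x) = x) :
    (x : ℕ) = 0 ∨ ((finRotate m * π) x : ℕ) = 0 := by
  set y := (finRotate m * π) x with hy
  have hxy : x ≠ y := (h.finRotate_mul_apply_ne x).symm
  have hyval := val_finRotate (π x)
  have hxval := val_finRotate (π y)
  rw [← Equiv.Perm.mul_apply, ← hy] at hyval
  rw [← Equiv.Perm.mul_apply, hx] at hxval
  by_contra! h0
  have hπy : (π y : ℕ) + 1 = x := by split_ifs at hxval <;> omega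
  have hπx : (π x : ℕ) + 1 = y := by split_ifs at hyval <;> omega
  rcases lt_or_gt_of_ne (Fin.val_ne_of_ne hxy) with hlt | hlt
  · exact h.2.2 (π y) x ⟨hπy.symm, by rw [(h.1 y).2]; omega, by omega⟩
  · exact h.2.2 (π x) y ⟨hπx.symm, by rw [(h.1 x).2]; omega, by omega⟩

lemma IsShadow.three_mul_numCycles_le (h : IsShadow π) :
    3 * numCycles (finRotate m * π) ≤ m + 1 := by
  cases m with
  | zero => simp [numCycles]
  | succ k =>
    have := three_mul_card_orbits_zpowers_le _ 0 h.finRotate_mul_apply_ne fun x hx =>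
      (h.val_eq_zero_of_finRotate_mul_sq hx).imp Fin.ext Fin.ext
    rwa [Nat.card_fin] at this

lemma IsShadow.add_two_le_six_mul_of_hasGenus {n g : ℕ} {π : Equiv.Perm (Fin (2 * n))}
    (h : IsShadow π) (hg : HasGenus n π g) (hn : 0 < n) : n + 2 ≤ 6 * g := by
  have := h.three_mul_numCycles_le
  unfold HasGenus at hg
  omega

end Shadow

lemma Set.finite_sigma_fst_preimage {ι : Type*} {β : ι → Type*} [∀ i, Finite (β i)]
    {s : Set ι} (hs : s.Finite) : (Sigma.fst ⁻¹' s : Set (Σ i, β i)).Finite :=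
  (hs.biUnion fun i _ => Set.finite_range (Sigma.mk (β := β) i)).subset
    fun p hp => Set.mem_biUnion hp ⟨p.2, rfl⟩

theorem finitely_many_shadows_general (g : ℕ) :
    {p : Σ n : ℕ, Equiv.Perm (Fin (2 * n)) | IsShadow p.2 ∧ HasGenus p.1 p.2 g}.Finite := by
  refine (Set.finite_sigma_fst_preimage (Set.finite_Iic (6 * g))).subset ?_
  rintro ⟨n, π⟩ ⟨hπ, hg⟩
  rcases n.eq_zero_or_pos with rfl | hn
  · exact Nat.zero_le _
  · have : n + 2 ≤ 6 * g := hπ.add_two_le_six_mul_of_hasGenus hg hn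
    exact Set.mem_Iic.mpr (show n ≤ 6 * g by omega)

/-- For fixed `g ≥ 1`, the set of shadows of genus `g` over one backbone is finite. -/
theorem finitely_many_shadows (g : ℕ) (hg : 1 ≤ g) :
    {p : Σ n : ℕ, Equiv.Perm (Fin (2 * n)) | IsShadow p.2 ∧ HasGenus p.1 p.2 g}.Finite :=
  finitely_many_shadows_general g
end

section
/- Gluing the two backbones of a shadow over two backbones of genus g (connecting the 3' end of the first backbone to the 5' end of the second) preserves the genus if both backbones lie on the same boundary component (type A), and increases the genus by exactly one if they lie on different boundary components (type B). -/
/-! The boundary components are the cycles of the boundary permutation `γ * π`, where `γ` runs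
along the backbones. Cutting the backbone after `c` turns `γ = finRotate` into `twoRotate`, i.e. it
multiplies the boundary permutation by the transposition of `u = c + 1` and `v = 0` (the images
of `c` and of the last vertex). Multiplying a permutation by `swap u v` splits the cycle through
`u` and `v` if they share one and merges their two cycles otherwise, leaving every other cycle
untouched. So the number of boundary components changes by exactly one, in the direction decided
by whether `u` and `v` lie on one boundary component of the two-backbone diagram, which is the
type A condition. -/

namespace Setoid

variable {α : Type*} [Finite α] {r s : Setoid α}

/-- `s` is `r` with the classes of `a` and `b` merged. -/
theorem card_quotient_eq_add_one_of_le (hle : r ≤ s) {a b : α} (hab : ¬ r a b) (hsab : s a b)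
    (hcover : ∀ x, s a x → r a x ∨ r b x) (hagree : ∀ x y, ¬ s a x → s x y → r x y) :
    Nat.card (Quotient r) = Nat.card (Quotient s) + 1 := by
  let f : Quotient r → Quotient s := Quotient.map' id hle
  have hbij : Set.BijOn f {Quotient.mk r b}ᶜ Set.univ := by
    refine ⟨Set.mapsTo_univ _ _, ?_, ?_⟩
    · intro qx hx qy hy hxy
      obtain ⟨x, rfl⟩ := Quotient.mk_surjective qx
      obtain ⟨y, rfl⟩ := Quotient.mk_surjective qy
      simp only [Set.mem_compl_singleton_iff, ne_eq, Quotient.eq] at hx hy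
      replace hxy : s x y := Quotient.eq.mp hxy
      refine Quotient.sound ?_
      by_cases hax : s a x
      · exact r.trans (r.symm ((hcover x hax).resolve_right (fun h => hx (r.symm h))))
          ((hcover y (s.trans hax hxy)).resolve_right (fun h => hy (r.symm h)))
      · exact hagree x y hax hxy
    · intro qx _
      obtain ⟨x, rfl⟩ := Quotient.mk_surjective qx
      by_cases hbx : r b x
      · refine ⟨Quotient.mk r a, fun h => hab (Quotient.eq.mp h), Quotient.sound ?_⟩
        exact s.trans hsab (hle hbx)
      · exact ⟨Quotient.mk r x, fun h => hbx (r.symm (Quotient.eq.mp h)), rfl⟩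
  have hcompl := Set.ncard_add_ncard_compl {Quotient.mk r b}
  rw [Set.ncard_singleton, hbij.ncard_eq, Set.ncard_univ] at hcompl
  omega

end Setoid

namespace Equiv.Perm

variable {α : Type*}

theorem pow_apply_eq_pow_apply_of_forall_lt {σ τ : Perm α} {x : α} {k : ℕ}
    (h : ∀ j < k, τ ((σ ^ j) x) = σ ((σ ^ j) x)) : (τ ^ k) x = (σ ^ k) x := by
  induction k with
  | zero => rfl
  | succ k ih =>
    rw [pow_succ', mul_apply, ih fun j hj => h j (by omega), h k (by omega), ← mul_apply,
      ← pow_succ']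

variable [DecidableEq α] [Finite α] {σ : Perm α} {u v : α}

theorem sameCycle_swap_mul_iff_of_not_sameCycle {x : α} (hu : ¬ σ.SameCycle x u)
    (hv : ¬ σ.SameCycle x v) (y : α) :
    (swap u v * σ).SameCycle x y ↔ σ.SameCycle x y := by
  have hpow (k : ℕ) : ((swap u v * σ) ^ k) x = (σ ^ k) x :=
    pow_apply_eq_pow_apply_of_forall_lt fun j _ => by
      have hx : σ.SameCycle x (σ ((σ ^ j) x)) :=
        sameCycle_apply_right.mpr (sameCycle_pow_right.mpr (SameCycle.refl σ x))
      exact swap_apply_of_ne_of_ne (fun h => hu (h ▸ hx)) (fun h => hv (h ▸ hx))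
  constructor
  · intro hxy
    obtain ⟨k, rfl⟩ := hxy.exists_nat_pow_eq
    rw [hpow]
    exact sameCycle_pow_right.mpr (SameCycle.refl σ x)
  · intro hxy
    obtain ⟨k, rfl⟩ := hxy.exists_nat_pow_eq
    rw [← hpow]
    exact sameCycle_pow_right.mpr (SameCycle.refl _ x)

theorem sameCycle_swap_mul_of_not_sameCycle (h : ¬ σ.SameCycle u v) :
    (swap u v * σ).SameCycle v u := by
  classical
  have hex : ∃ p, 0 < p ∧ (σ ^ p) v = v :=
    let ⟨p, hp0, _, hp⟩ := (SameCycle.refl σ v).exists_pow_eq''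
    ⟨p, hp0, hp⟩
  obtain ⟨hp0, hpv⟩ := Nat.find_spec hex
  obtain ⟨q, hq⟩ : ∃ q, Nat.find hex = q + 1 := Nat.exists_eq_succ_of_ne_zero hp0.ne'
  have hagree : ((swap u v * σ) ^ q) v = (σ ^ q) v :=
    pow_apply_eq_pow_apply_of_forall_lt fun j hj => by
      rw [mul_apply, ← mul_apply σ, ← pow_succ']
      refine swap_apply_of_ne_of_ne (fun hu => h ?_) fun hv => ?_
      · rw [← hu]
        exact (sameCycle_pow_right.mpr (SameCycle.refl σ v)).symm
      · exact Nat.find_min hex (by omega : j + 1 < Nat.find hex) ⟨by omega, hv⟩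
  refine ⟨(q + 1 : ℕ), ?_⟩
  rw [zpow_natCast, pow_succ', mul_apply, hagree, mul_apply, ← mul_apply σ, ← pow_succ', ← hq,
    hpv, swap_apply_right]

theorem not_sameCycle_swap_mul_of_sameCycle (huv : u ≠ v) (h : σ.SameCycle u v) :
    ¬ (swap u v * σ).SameCycle u v := by
  classical
  have hex : ∃ k, 0 < k ∧ (σ ^ k) u = v :=
    let ⟨k, hk0, _, hk⟩ := h.exists_pow_eq''
    ⟨k, hk0, hk⟩
  set k := Nat.find hex
  obtain ⟨hk0, hkv⟩ : 0 < k ∧ (σ ^ k) u = v := Nat.find_spec hex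
  have hne_v : ∀ j, 0 < j → j < k → (σ ^ j) u ≠ v := fun j hj hjk hv =>
    Nat.find_min hex hjk ⟨hj, hv⟩
  have hne_u : ∀ j, 0 < j → j < k → (σ ^ j) u ≠ u := fun j hj hjk hu => by
    refine hne_v (k - j) (by omega) (by omega) ?_
    rwa [← hu, ← mul_apply, ← pow_add, Nat.sub_add_cancel hjk.le]
  have hagree : ∀ i < k, ((swap u v * σ) ^ i) u = (σ ^ i) u := fun i hi =>
    pow_apply_eq_pow_apply_of_forall_lt fun j hj => by
      rw [mul_apply, ← mul_apply σ, ← pow_succ']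
      exact swap_apply_of_ne_of_ne (hne_u (j + 1) (by omega) (by omega))
        (hne_v (j + 1) (by omega) (by omega))
  -- the `swap` closes the arc `u, σ u, …, σ^(k-1) u` into a cycle of `swap u v * σ` avoiding `v`
  have hreturn : ((swap u v * σ) ^ k) u = u := by
    obtain ⟨q, hq⟩ : ∃ q, k = q + 1 := Nat.exists_eq_succ_of_ne_zero hk0.ne'
    rw [hq, pow_succ', mul_apply, hagree q (by omega), mul_apply, ← mul_apply σ, ← pow_succ', ← hq,
      hkv, swap_apply_right]
  intro hτ
  obtain ⟨i, hi⟩ := hτ.exists_nat_pow_eq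
  have hmod : ((swap u v * σ) ^ (i % k)) u = v := by
    rwa [← Nat.mod_add_div i k, pow_add, mul_apply, pow_mul,
      pow_apply_eq_self_of_apply_eq_self hreturn] at hi
  rw [hagree _ (Nat.mod_lt i hk0)] at hmod
  rcases Nat.eq_zero_or_pos (i % k) with h0 | hpos
  · rw [h0, pow_zero, one_apply] at hmod
    exact huv hmod
  · exact hne_v _ hpos (Nat.mod_lt i hk0) hmod

end Equiv.Perm

open Equiv Equiv.Perm

section numCycles

variable {m : ℕ}

theorem numCycles_eq_card_quotient_sameCycle (σ : Perm (Fin m)) :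
    numCycles σ = Nat.card (Quotient (SameCycle.setoid σ)) := by
  have horbit : MulAction.orbitRel (Subgroup.zpowers σ) (Fin m) = SameCycle.setoid σ := by
    ext x y
    simp only [MulAction.orbitRel_apply, MulAction.mem_orbit_iff, Subtype.exists,
      Subgroup.mem_zpowers_iff, exists_prop, exists_exists_eq_and, Subgroup.mk_smul,
      Perm.smul_def]
    exact sameCycle_comm
  rw [numCycles, horbit]

theorem numCycles_pos [NeZero m] (σ : Perm (Fin m)) : 0 < numCycles σ :=
  Nat.card_pos

theorem numCycles_swap_mul_of_sameCycle {σ : Perm (Fin m)} {u v : Fin m} (huv : u ≠ v)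
    (h : σ.SameCycle u v) : numCycles (swap u v * σ) = numCycles σ + 1 := by
  rw [numCycles_eq_card_quotient_sameCycle, numCycles_eq_card_quotient_sameCycle]
  have hlocal : ∀ x, ¬ σ.SameCycle u x → ∀ y, (swap u v * σ).SameCycle x y ↔ σ.SameCycle x y :=
    fun x hx => sameCycle_swap_mul_iff_of_not_sameCycle (fun hxu => hx hxu.symm)
      (fun hxv => hx (h.trans hxv.symm))
  refine Setoid.card_quotient_eq_add_one_of_le (a := u) (b := v) ?_
    (not_sameCycle_swap_mul_of_sameCycle huv h) h ?_ fun x y hx => (hlocal x hx y).mpr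
  · intro x y hxy
    by_cases hx : σ.SameCycle u x
    · by_cases hy : σ.SameCycle u y
      · exact hx.symm.trans hy
      · exact ((hlocal y hy x).mp hxy.symm).symm
    · exact (hlocal x hx y).mp hxy
  · intro x hx
    by_contra! hτ
    have hback := sameCycle_swap_mul_iff_of_not_sameCycle (σ := swap u v * σ)
      (fun hxu => hτ.1 hxu.symm) (fun hxv => hτ.2 hxv.symm) u
    rw [swap_mul_self_mul] at hback
    exact hτ.1 (hback.mp hx.symm).symm

theorem numCycles_swap_mul_of_not_sameCycle {σ : Perm (Fin m)} {u v : Fin m}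
    (h : ¬ σ.SameCycle u v) : numCycles (swap u v * σ) + 1 = numCycles σ := by
  have huv : u ≠ v := fun huv => h (huv ▸ SameCycle.refl σ u)
  have hsplit := numCycles_swap_mul_of_sameCycle huv (sameCycle_swap_mul_of_not_sameCycle h).symm
  rwa [swap_mul_self_mul, eq_comm] at hsplit

end numCycles

theorem twoRotate_mul_eq_swap_mul (n : ℕ) (c : Fin (2 * n)) (π : Perm (Fin (2 * n))) :
    twoRotate n c * π =
      swap (finRotate _ c) (finRotate _ (lastV n c)) * (finRotate (2 * n) * π) := by
  rw [twoRotate, mul_swap_eq_swap_mul, mul_assoc]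

theorem typeA_iff_sameCycle {n : ℕ} {c : Fin (2 * n)} {π : Perm (Fin (2 * n))}
    (hπ : IsMatching π) :
    TypeA n c π ↔ (twoRotate n c * π).SameCycle (finRotate _ (lastV n c)) (finRotate _ c) := by
  rw [TypeA, ← sameCycle_apply_left, ← sameCycle_apply_right]
  simp [twoRotate, (hπ _).2]

/-- Gluing the two backbones of a shadow over two backbones of genus `g` (connecting
the 3' end of the first backbone to the 5' end of the second, i.e. forgetting the cut
point `c`) preserves the genus if the shadow is of type A (both backbones on one
boundary component) and increases the genus by exactly one if it is of type B. -/
theorem glue_genus (n : ℕ) (c : Fin (2 * n)) (π : Equiv.Perm (Fin (2 * n))) (g : ℕ)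
    (hc : (c : ℕ) + 1 < 2 * n) (hsh : IsShadow2 π c) (hg : HasGenus2 n c π g) :
    (TypeA n c π → HasGenus n π g) ∧ (¬ TypeA n c π → HasGenus n π (g + 1)) := by
  have : NeZero (2 * n) := ⟨by omega⟩
  set u := finRotate (2 * n) c
  set v := finRotate (2 * n) (lastV n c)
  have huv : u ≠ v := (finRotate _).injective.ne fun h => by
    simp only [Fin.ext_iff, lastV] at h
    omega
  rw [HasGenus2, twoRotate_mul_eq_swap_mul] at hg
  rw [typeA_iff_sameCycle hsh.1, twoRotate_mul_eq_swap_mul, HasGenus, HasGenus]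
  refine ⟨fun hA => ?_, fun hB => ?_⟩
  · have hsplit := numCycles_swap_mul_of_sameCycle huv hA.symm
    rw [swap_mul_self_mul] at hsplit
    rw [hsplit, max_eq_right (by omega)]
    omega
  · have hmerge := numCycles_swap_mul_of_not_sameCycle fun h => hB h.symm
    rw [swap_mul_self_mul] at hmerge
    rw [max_eq_right (numCycles_pos _)]
    omega
end

section
/- An irreducible shadow of genus 0 over two backbones contains at least 2 and at most 4 arcs, and for every ℓ ∈ {2,3,4} there exists an irreducible shadow of genus 0 over two backbones with exactly ℓ arcs. -/
/-!
A genus-zero shadow on `n` arcs over two backbones has `n` boundary components, i.e. the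
permutation `σ = twoRotate n c * π` of the `2n` endpoints has `n` cycles. A cycle of `σ` of
length at most two containing neither `π c` nor `π (2n - 1)` would force either an arc of
length one, which crosses nothing, or a stack away from the backbone gap. Hence at
most two cycles are that short, all others have length at least three, and
`3n - 4 ≤ 2n`. The bound is attained by explicit shadows with two, three and four arcs.
-/

open Equiv Finset

namespace Equiv.Perm

variable {α : Type*}

theorem orbitRel_zpowers_eq_sameCycleSetoid (σ : Perm α) :
    MulAction.orbitRel (Subgroup.zpowers σ) α = SameCycle.setoid σ := by
  ext x y
  rw [MulAction.orbitRel_apply, MulAction.mem_orbit_iff]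
  constructor
  · rintro ⟨⟨g, hg⟩, rfl⟩
    obtain ⟨k, rfl⟩ := Subgroup.mem_zpowers_iff.mp hg
    exact ⟨-k, by simp⟩
  · rintro ⟨k, hk⟩
    exact ⟨⟨σ ^ (-k), Subgroup.zpow_mem_zpowers _ _⟩, by simp [← hk]⟩

variable [Fintype α] [DecidableEq α]

instance decidableRelSameCycleSetoid (σ : Perm α) : DecidableRel (SameCycle.setoid σ).r :=
  inferInstanceAs (DecidableRel σ.SameCycle)

theorem apply_apply_eq_of_card_sameCycle_le_two (σ : Perm α) (x : α)
    (h : #{y | σ.SameCycle y x} ≤ 2) : σ (σ x) = x := by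
  by_contra hne
  refine (Finset.two_lt_card.mpr ⟨x, ?_, σ x, ?_, σ (σ x), ?_, ?_, Ne.symm hne, ?_⟩).not_ge h
  · simp [SameCycle.refl]
  · simp [sameCycle_apply_left, SameCycle.refl]
  · simp [sameCycle_apply_left, SameCycle.refl]
  · exact fun hx => hne (by rw [← hx, ← hx])
  · intro hx
    have := σ.injective hx
    exact hne (by rw [← this, ← this])

end Equiv.Perm

theorem numCycles_eq_card_quotient {m : ℕ} (σ : Perm (Fin m)) :
    numCycles σ = Fintype.card (Quotient (Perm.SameCycle.setoid σ)) := by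
  rw [numCycles, Perm.orbitRel_zpowers_eq_sameCycleSetoid, Nat.card_eq_fintype_card]

theorem Finset.add_mul_card_le_sum_add {ι : Type*} [DecidableEq ι] (s t : Finset ι)
    (f : ι → ℕ) {a d : ℕ} (ha : ∀ i ∈ s, a ≤ f i) (hd : ∀ i ∈ s, i ∉ t → a + d ≤ f i) :
    (a + d) * #s ≤ ∑ i ∈ s, f i + d * #t :=
  calc (a + d) * #s = ∑ i ∈ s, (a + d) := by rw [sum_const, smul_eq_mul, mul_comm]
    _ ≤ ∑ i ∈ s, (f i + if i ∈ t then d else 0) := by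
      refine sum_le_sum fun i hi => ?_
      split_ifs with hit
      · linarith [ha i hi]
      · linarith [hd i hi hit]
    _ = ∑ i ∈ s, f i + d * #(s ∩ t) := by
      rw [sum_add_distrib, sum_ite_mem, sum_const, smul_eq_mul, mul_comm]
    _ ≤ ∑ i ∈ s, f i + d * #t := by gcongr; exact inter_subset_right

/-- If every fixed point and every 2-cycle of `σ` meets `T`, then `σ` has at most `#T` cycles
of length below three. -/
theorem three_mul_numCycles_le {m : ℕ} (σ : Perm (Fin m)) (T : Finset (Fin m))
    (hT : ∀ x, σ (σ x) = x → ∃ t ∈ T, σ.SameCycle x t) :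
    3 * numCycles σ ≤ m + 2 * #T := by
  let mk : Fin m → Quotient (Perm.SameCycle.setoid σ) := Quotient.mk _
  let fiber q := univ.filter (fun y => mk y = q)
  have hfiber : ∀ x, fiber (mk x) = univ.filter (fun y => σ.SameCycle y x) := fun x => by
    ext y; simp [fiber, mk, Quotient.eq]; rfl
  have hsum : ∑ q, #(fiber q) = m := by
    rw [← card_eq_sum_card_fiberwise (fun y _ => mem_univ (mk y)), card_univ, Fintype.card_fin]
  have hpos : ∀ q ∈ univ, 1 ≤ #(fiber q) := by
    rintro ⟨x⟩ -
    exact card_pos.mpr ⟨x, by simp [fiber, mk]; rfl⟩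
  have hlong : ∀ q ∈ univ, q ∉ T.image mk → 1 + 2 ≤ #(fiber q) := by
    rintro ⟨x⟩ - hq
    by_contra! hshort
    obtain ⟨t, ht, hxt⟩ := hT x (σ.apply_apply_eq_of_card_sameCycle_le_two x
      (by rw [← hfiber]; exact Nat.le_of_lt_succ hshort))
    exact hq (mem_image.mpr ⟨t, ht, (Quotient.sound hxt).symm⟩)
  have := Finset.add_mul_card_le_sum_add univ (T.image mk) (fun q => #(fiber q)) hpos hlong
  rw [numCycles_eq_card_quotient, ← card_univ]
  linarith [card_image_le (s := T) (f := mk)]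

theorem NoLoneArcs.four_le {m : ℕ} {π : Perm (Fin m)} (hl : NoLoneArcs π) (i : Fin m) :
    4 ≤ m := by
  obtain ⟨j, hj⟩ := hl i
  have := (max j (π j)).isLt
  rcases hj with ⟨h₁, h₂, h₃⟩ | ⟨h₁, h₂, h₃⟩ <;>
    simp only [Fin.lt_def, Fin.coe_min, Fin.coe_max] at h₁ h₂ h₃ this ⊢ <;> omega

theorem NoLoneArcs.val_add_one_ne {m : ℕ} {π : Perm (Fin m)} (hl : NoLoneArcs π) (x : Fin m) :
    (π x : ℕ) + 1 ≠ x := by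
  intro hx
  obtain ⟨j, hj⟩ := hl x
  rcases hj with ⟨h₁, h₂, h₃⟩ | ⟨h₁, h₂, h₃⟩ <;>
    simp only [Fin.lt_def, Fin.coe_min, Fin.coe_max] at h₁ h₂ h₃ <;> omega

theorem twoRotate_apply_val {n : ℕ} {c w : Fin (2 * n)} (hwc : w ≠ c) (hwl : w ≠ lastV n c) :
    (twoRotate n c w : ℕ) = w + 1 := by
  have : NeZero (2 * n) := c.neZero
  have hw : (w : ℕ) + 1 < 2 * n := by
    have : (w : ℕ) ≠ 2 * n - 1 := fun h => hwl (Fin.ext h)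
    omega
  rw [twoRotate, Perm.mul_apply, swap_apply_of_ne_of_ne hwc hwl, finRotate_apply,
    Fin.val_add_one_of_lt' hw]

section TwoBackbones

variable {n : ℕ} {c : Fin (2 * n)} {π : Perm (Fin (2 * n))}

/-- The arcs `(π y, x)` and `(π x, y)` with `π y + 1 = x < y = π x + 1` form a stack. -/
theorem NoStacks2.eq_of_stacked (hm : IsMatching π) (hns : NoStacks2 π c) {x y : Fin (2 * n)}
    (hlt : (x : ℕ) < y) (hx : (x : ℕ) = π y + 1) (hy : (y : ℕ) = π x + 1) :
    π y = c ∨ π x = c := by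
  refine (hns (π y) x ⟨hx, ?_, by omega⟩).imp Fin.ext Fin.ext
  rw [(hm y).2]
  omega

theorem IsShadow2.exists_sameCycle_of_apply_apply_eq (hsh : IsShadow2 π c) {x : Fin (2 * n)}
    (hx : (twoRotate n c * π) ((twoRotate n c * π) x) = x) :
    ∃ t ∈ ({c, lastV n c} : Finset _), (twoRotate n c * π).SameCycle x (π t) := by
  obtain ⟨hm, hl, hns⟩ := hsh
  set σ := twoRotate n c * π
  set y := σ x
  by_cases hxT : π x ∈ ({c, lastV n c} : Finset _)
  · exact ⟨π x, hxT, by rw [(hm x).2]⟩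
  by_cases hyT : π y ∈ ({c, lastV n c} : Finset _)
  · exact ⟨π y, hyT, by rw [(hm y).2]; exact Perm.sameCycle_apply_right.mpr (.refl _ _)⟩
  simp only [mem_insert, mem_singleton, not_or] at hxT hyT
  exfalso
  have hxy : (y : ℕ) = π x + 1 := twoRotate_apply_val hxT.1 hxT.2
  have hyx : (x : ℕ) = π y + 1 := by
    rw [← twoRotate_apply_val hyT.1 hyT.2]
    exact congrArg Fin.val hx.symm
  rcases lt_trichotomy (x : ℕ) y with hlt | heq | hgt
  · rcases hns.eq_of_stacked hm hlt hyx hxy with h | h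
    exacts [hyT.1 h, hxT.1 h]
  · exact hl.val_add_one_ne x (by omega)
  · rcases hns.eq_of_stacked hm hgt hxy hyx with h | h
    exacts [hxT.1 h, hyT.1 h]

theorem two_le_and_le_four_of_hasGenus2_zero (hsh : IsShadow2 π c) (hg : HasGenus2 n c π 0) :
    2 ≤ n ∧ n ≤ 4 := by
  have hcount := three_mul_numCycles_le _ _ fun x hx =>
    let ⟨t, ht, hxt⟩ := hsh.exists_sameCycle_of_apply_apply_eq hx
    ⟨π t, mem_image_of_mem π ht, hxt⟩
  have hT : #(({c, lastV n c} : Finset _).image π) ≤ 2 :=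
    card_image_le.trans (card_insert_le _ _)
  have h4 := hsh.2.1.four_le c
  rw [HasGenus2] at hg
  omega

end TwoBackbones

instance {m : ℕ} (π : Perm (Fin m)) : DecidableRel (Crosses π) := fun _ _ => by
  unfold Crosses; infer_instance

instance {m : ℕ} (π : Perm (Fin m)) : Decidable (IsMatching π) := by
  unfold IsMatching; infer_instance

instance {m : ℕ} (π : Perm (Fin m)) : Decidable (NoLoneArcs π) := by
  unfold NoLoneArcs; infer_instance

instance {n : ℕ} (π : Perm (Fin (2 * n))) (c : Fin (2 * n)) : Decidable (IsShadow2 π c) := by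
  unfold IsShadow2 NoStacks2 StackPair; infer_instance

instance {m : ℕ} (π : Perm (Fin m)) : Std.Symm (Crosses π) :=
  ⟨fun _ _ => Or.symm⟩

theorem irred_of_crosses_within_two {m : ℕ} {π : Perm (Fin m)} (r : Fin m)
    (h : ∀ i, Crosses π r i ∨ ∃ j, Crosses π r j ∧ Crosses π j i) : Irred π := by
  have hr : ∀ i, Relation.ReflTransGen (Crosses π) r i := fun i => by
    rcases h i with hri | ⟨j, hrj, hji⟩
    exacts [.single hri, .tail (.single hrj) hji]
  exact fun i j => (Std.Symm.symm _ _ (hr i)).trans (hr j)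

def shadow2 : Perm (Fin (2 * 2)) := swap 0 2 * swap 1 3

def shadow3 : Perm (Fin (2 * 3)) := swap 0 3 * swap 1 4 * swap 2 5

def shadow4 : Perm (Fin (2 * 4)) := swap 0 3 * swap 1 5 * swap 2 6 * swap 4 7

theorem exists_irred_shadow2_hasGenus2_zero {ℓ : ℕ} (h2 : 2 ≤ ℓ) (h4 : ℓ ≤ 4) :
    ∃ (c : Fin (2 * ℓ)) (π : Perm (Fin (2 * ℓ))),
      (c : ℕ) + 1 < 2 * ℓ ∧ IsShadow2 π c ∧ Irred π ∧ HasGenus2 ℓ c π 0 := by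
  interval_cases ℓ
  · exact ⟨1, shadow2, by decide, by decide, irred_of_crosses_within_two 0 (by decide),
      by rw [HasGenus2, numCycles_eq_card_quotient]; decide⟩
  · exact ⟨1, shadow3, by decide, by decide, irred_of_crosses_within_two 0 (by decide),
      by rw [HasGenus2, numCycles_eq_card_quotient]; decide⟩
  · exact ⟨3, shadow4, by decide, by decide, irred_of_crosses_within_two 0 (by decide),
      by rw [HasGenus2, numCycles_eq_card_quotient]; decide⟩

/-- An irreducible shadow of genus `0` over two backbones contains at least `2` and at
most `4` arcs, and for every `ℓ ∈ {2,3,4}` there exists an irreducible shadow of genus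
`0` over two backbones with exactly `ℓ` arcs. -/
theorem irreducible_genus_zero_two_backbones :
    (∀ (n : ℕ) (c : Fin (2 * n)) (π : Equiv.Perm (Fin (2 * n))),
      (c : ℕ) + 1 < 2 * n → IsShadow2 π c → Irred π → HasGenus2 n c π 0 →
        2 ≤ n ∧ n ≤ 4) ∧
    (∀ ℓ : ℕ, 2 ≤ ℓ → ℓ ≤ 4 →
      ∃ (c : Fin (2 * ℓ)) (π : Equiv.Perm (Fin (2 * ℓ))),
        (c : ℕ) + 1 < 2 * ℓ ∧ IsShadow2 π c ∧ Irred π ∧ HasGenus2 ℓ c π 0) :=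
  ⟨fun _ _ _ _ hsh _ hg => two_le_and_le_four_of_hasGenus2_zero hsh hg,
    fun _ h2 h4 => exists_irred_shadow2_hasGenus2_zero h2 h4⟩
end
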